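/- In any CL5⁻ proof of a formula F of length k that contains no application of the empty cirquent axiom, no cirquent occurring in the proof contains more than k² arcs (pairs of an ogroup and an oformula it contains). -/

import Mathlib

namespace CirquentCalc

/-- Formulas: literals (negation applied only to atoms), ∧, ∨. -/
inductive Fml where
  | pos : ℕ → Fml
  | neg : ℕ → Fml
  | and : Fml → Fml → Fml
  | or : Fml → Fml → Fml
deriving DecidableEq

namespace Fml

/-- Negation (pushed to atoms, as ¬ applies only to atoms). -/
def negate : Fml → Fml
  | pos n => neg n
  | neg n => pos n
  | and a b => or a.negate b.negate
  | or a b => and a.negate b.negate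

/-- Substitution extended homomorphically. -/
def subst (σ : ℕ → Fml) : Fml → Fml
  | pos n => σ n
  | neg n => (σ n).negate
  | and a b => and (a.subst σ) (b.subst σ)
  | or a b => or (a.subst σ) (b.subst σ)

/-- Classical evaluation under a truth assignment. -/
def eval (v : ℕ → Bool) : Fml → Bool
  | pos n => v n
  | neg n => !(v n)
  | and a b => a.eval v && b.eval v
  | or a b => a.eval v || b.eval v

/-- Number of positive occurrences of atom `a`. -/
def cPos (a : ℕ) : Fml → ℕ
  | pos n => if n = a then 1 else 0
  | neg _ => 0
  | and f g => f.cPos a + g.cPos a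
  | or f g => f.cPos a + g.cPos a

/-- Number of negative occurrences of atom `a`. -/
def cNeg (a : ℕ) : Fml → ℕ
  | pos _ => 0
  | neg n => if n = a then 1 else 0
  | and f g => f.cNeg a + g.cNeg a
  | or f g => f.cNeg a + g.cNeg a

/-- Total number of positive occurrences of atoms. -/
def posOcc : Fml → ℕ
  | pos _ => 1
  | neg _ => 0
  | and f g => f.posOcc + g.posOcc
  | or f g => f.posOcc + g.posOcc

/-- Length: total number of occurrences of literals and connectives. -/
def len : Fml → ℕ
  | pos _ => 1
  | neg _ => 1
  | and f g => f.len + g.len + 1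
  | or f g => f.len + g.len + 1

/-- Number of occurrences of ∧. -/
def nAnd : Fml → ℕ
  | pos _ => 0
  | neg _ => 0
  | and f g => f.nAnd + g.nAnd + 1
  | or f g => f.nAnd + g.nAnd

/-- Number of occurrences of ∨. -/
def nOr : Fml → ℕ
  | pos _ => 0
  | neg _ => 0
  | and f g => f.nOr + g.nOr
  | or f g => f.nOr + g.nOr + 1

end Fml

def Tautology (A : Fml) : Prop := ∀ v, A.eval v = true

/-- No atom has more than two occurrences. -/
def Binary (A : Fml) : Prop := ∀ a, A.cPos a + A.cNeg a ≤ 2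

/-- Whenever an atom occurs twice, one occurrence is positive and one negative. -/
def Normal (A : Fml) : Prop := ∀ a, A.cPos a ≤ 1 ∧ A.cNeg a ≤ 1

def AtomicLevel (σ : ℕ → Fml) : Prop := ∀ n, ∃ m, σ n = Fml.pos m

/-- `F` is an instance of `B`: σ(B) = F for some substitution σ. -/
def InstanceOf (F B : Fml) : Prop := ∃ σ, B.subst σ = F

/-- `F` is an atomic-level instance of `B`. -/
def AtomicInstanceOf (F B : Fml) : Prop := ∃ σ, AtomicLevel σ ∧ B.subst σ = F

/-- A cirquent: a pool of (occurrences of) formulas, and a list of ogroups,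
each an (index-)set of oformulas of the pool. -/
structure Cirquent where
  pool : List Fml
  groups : List (Finset ℕ)

def emptyCirquent : Cirquent := ⟨[], []⟩

def idCirquent (F : Fml) : Cirquent := ⟨[F.negate, F], [{0, 1}]⟩

/-- The cirquent with pool ⟨F⟩ and one ogroup containing F. -/
def fmlCirquent (F : Fml) : Cirquent := ⟨[F], [{0}]⟩

/-- Index renaming swapping `i` and `i+1`. -/
def swapIdx (i : ℕ) : ℕ → ℕ := fun j => if j = i then i + 1 else if j = i + 1 then i else j

/-- Index renaming when a new oformula is inserted at position `i`. -/
def insShift (i : ℕ) : ℕ → ℕ := fun j => if j < i then j else j + 1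

/-- Index renaming when the oformulas at positions `i`, `i+1` are merged into one at `i`. -/
def mergeIdx (i : ℕ) : ℕ → ℕ := fun j => if j ≤ i then j else j - 1

/-- Mix: placing the two premise cirquents side by side. -/
def MixStep (A B C : Cirquent) : Prop :=
  C.pool = A.pool ++ B.pool ∧
  C.groups = A.groups ++ B.groups.map (Finset.image (· + A.pool.length))

/-- Oformula exchange: swap two adjacent oformulas, preserving containment. -/
def OfExchStep (P C : Cirquent) : Prop :=
  ∃ (l₁ l₂ : List Fml) (F G : Fml),
    P.pool = l₁ ++ F :: G :: l₂ ∧ C.pool = l₁ ++ G :: F :: l₂ ∧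
    C.groups = P.groups.map (Finset.image (swapIdx l₁.length))

/-- Ogroup exchange: swap two adjacent ogroups. -/
def OgExchStep (P C : Cirquent) : Prop :=
  C.pool = P.pool ∧
  ∃ (g₁ g₂ : List (Finset ℕ)) (Γ Δ : Finset ℕ),
    P.groups = g₁ ++ Γ :: Δ :: g₂ ∧ C.groups = g₁ ++ Δ :: Γ :: g₂

/-- Pool weakening: insert a new oformula, contained in no ogroup. -/
def PoolWeakStep (P C : Cirquent) : Prop :=
  ∃ (l₁ l₂ : List Fml) (F : Fml),
    P.pool = l₁ ++ l₂ ∧ C.pool = l₁ ++ F :: l₂ ∧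
    C.groups = P.groups.map (Finset.image (insShift l₁.length))

/-- Ogroup weakening: add a new arc between a pre-existing ogroup and oformula. -/
def OgWeakStep (P C : Cirquent) : Prop :=
  C.pool = P.pool ∧
  ∃ (g₁ g₂ : List (Finset ℕ)) (Γ : Finset ℕ) (j : ℕ),
    j < P.pool.length ∧ j ∉ Γ ∧
    P.groups = g₁ ++ Γ :: g₂ ∧ C.groups = g₁ ++ insert j Γ :: g₂

/-- Downward duplication: replace an ogroup by two adjacent copies of it. -/
def DupDownStep (P C : Cirquent) : Prop :=
  C.pool = P.pool ∧
  ∃ (g₁ g₂ : List (Finset ℕ)) (Γ : Finset ℕ),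
    P.groups = g₁ ++ Γ :: g₂ ∧ C.groups = g₁ ++ Γ :: Γ :: g₂

/-- Upward duplication: the converse of downward duplication. -/
def DupUpStep (P C : Cirquent) : Prop :=
  C.pool = P.pool ∧
  ∃ (g₁ g₂ : List (Finset ℕ)) (Γ : Finset ℕ),
    P.groups = g₁ ++ Γ :: Γ :: g₂ ∧ C.groups = g₁ ++ Γ :: g₂

/-- ∨-introduction: merge two adjacent oformulas F, G into F ∨ G. -/
def OrIntroStep (P C : Cirquent) : Prop :=
  ∃ (l₁ l₂ : List Fml) (F G : Fml),
    P.pool = l₁ ++ F :: G :: l₂ ∧ C.pool = l₁ ++ (Fml.or F G) :: l₂ ∧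
    C.groups = P.groups.map (Finset.image (mergeIdx l₁.length))

/-- The merging of the ogroup list in ∧-introduction: no ogroup contains both `i`
and `i+1`; every ogroup containing `i` is immediately followed by one containing
`i+1` and vice versa; such pairs are merged. -/
inductive AndMerge (i : ℕ) : List (Finset ℕ) → List (Finset ℕ) → Prop where
  | nil : AndMerge i [] []
  | skip {Γ : Finset ℕ} {l l' : List (Finset ℕ)} :
      i ∉ Γ → (i + 1) ∉ Γ → AndMerge i l l' → AndMerge i (Γ :: l) (Γ :: l')
  | merge {Γ Δ : Finset ℕ} {l l' : List (Finset ℕ)} :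
      i ∈ Γ → (i + 1) ∉ Γ → (i + 1) ∈ Δ → i ∉ Δ →
      AndMerge i l l' → AndMerge i (Γ :: Δ :: l) ((Γ ∪ Δ) :: l')

/-- ∧-introduction. -/
def AndIntroStep (P C : Cirquent) : Prop :=
  ∃ (l₁ l₂ : List Fml) (F G : Fml) (merged : List (Finset ℕ)),
    P.pool = l₁ ++ F :: G :: l₂ ∧ C.pool = l₁ ++ (Fml.and F G) :: l₂ ∧
    AndMerge l₁.length P.groups merged ∧
    C.groups = merged.map (Finset.image (mergeIdx l₁.length))

inductive RuleName where
  | emptyAx | idAx | mix | ofExch | ogExch | poolWeak | ogWeak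
  | dupDown | dupUp | orIntro | andIntro
deriving DecidableEq

/-- The unary (one-premise) rules, by name. -/
def unRel : RuleName → Cirquent → Cirquent → Prop
  | .ofExch => OfExchStep
  | .ogExch => OgExchStep
  | .poolWeak => PoolWeakStep
  | .ogWeak => OgWeakStep
  | .dupDown => DupDownStep
  | .dupUp => DupUpStep
  | .orIntro => OrIntroStep
  | .andIntro => AndIntroStep
  | _ => fun _ _ => False

/-- Proof trees: each node is labeled by its cirquent and the rule used. -/
inductive PTree where
  | leaf (C : Cirquent) (r : RuleName)
  | un (C : Cirquent) (r : RuleName) (p : PTree)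
  | bin (C : Cirquent) (r : RuleName) (p q : PTree)

namespace PTree

def concl : PTree → Cirquent
  | leaf C _ => C
  | un C _ _ => C
  | bin C _ _ _ => C

/-- Validity: each node follows from its children by the named rule. -/
def Valid : PTree → Prop
  | leaf C r =>
      (r = .emptyAx ∧ C = emptyCirquent) ∨ (r = .idAx ∧ ∃ F, C = idCirquent F)
  | un C r p => p.Valid ∧ unRel r p.concl C
  | bin C r p q => p.Valid ∧ q.Valid ∧ r = .mix ∧ MixStep p.concl q.concl C

/-- Number of applications of rule `r` in the proof. -/
def count (r : RuleName) : PTree → ℕ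
  | leaf _ r' => if r' = r then 1 else 0
  | un _ r' p => (if r' = r then 1 else 0) + p.count r
  | bin _ r' p q => (if r' = r then 1 else 0) + p.count r + q.count r

/-- The cirquents occurring in the proof. -/
def cirquents : PTree → List Cirquent
  | leaf C _ => [C]
  | un C _ p => C :: p.cirquents
  | bin C _ p q => C :: (p.cirquents ++ q.cirquents)

/-- Total number of rule applications (nodes). -/
def nodes : PTree → ℕ
  | leaf _ _ => 1
  | un _ _ p => p.nodes + 1
  | bin _ _ p q => p.nodes + q.nodes + 1

/-- Number of leaves of the proof tree. -/
def leavesCount : PTree → ℕ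
  | leaf _ _ => 1
  | un _ _ p => p.leavesCount
  | bin _ _ p q => p.leavesCount + q.leavesCount

end PTree

/-- A proof uses no duplication. -/
def DupFree (p : PTree) : Prop :=
  p.count RuleName.dupDown = 0 ∧ p.count RuleName.dupUp = 0

/-- Provability of a cirquent in CL5. -/
def ProvesC (C : Cirquent) : Prop := ∃ p : PTree, p.Valid ∧ p.concl = C

/-- Provability of a formula in CL5. -/
def ProvesCL5 (F : Fml) : Prop := ∃ p : PTree, p.Valid ∧ p.concl = fmlCirquent F

/-- Provability of a formula in CL5⁻ (CL5 without duplication). -/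
def ProvesCL5m (F : Fml) : Prop :=
  ∃ p : PTree, p.Valid ∧ DupFree p ∧ p.concl = fmlCirquent F

/-- Number of arcs of a cirquent (sum of the sizes of its ogroups). -/
def Cirquent.arcs (C : Cirquent) : ℕ := (C.groups.map Finset.card).sum

/-- Size of a cirquent: sum of the lengths of the oformulas in its pool plus
the sum of the sizes of its ogroups. -/
def Cirquent.size (C : Cirquent) : ℕ := (C.pool.map Fml.len).sum + C.arcs

/-- Size of a proof: the sum of the sizes of the cirquents it contains. -/
def PTree.size (p : PTree) : ℕ := (p.cirquents.map Cirquent.size).sum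

/-- Total number of positive occurrences of atoms in the pool. -/
def Cirquent.poolPosOcc (C : Cirquent) : ℕ := (C.pool.map Fml.posOcc).sum

end CirquentCalc

open CirquentCalc

/-! Compare the number of ogroups of a cirquent with the total length of its pool. At an axiom the
former is at most the latter, mix adds both, and every other rule except downward duplication
keeps or lowers the number of ogroups while no rule shortens the pool. Since the total length is
`k` at the root and never decreases towards it, every cirquent of the proof has at most `k`
ogroups, each containing at most `k` oformulas. -/

namespace CirquentCalc

open Finset

def Cirquent.totalLen (C : Cirquent) : ℕ := (C.pool.map Fml.len).sum

def Cirquent.WellFormed (C : Cirquent) : Prop := ∀ Γ ∈ C.groups, Γ ⊆ range C.pool.length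

lemma Fml.one_le_len (F : Fml) : 1 ≤ F.len := by
  induction F <;> simp only [Fml.len] <;> omega

lemma Cirquent.pool_length_le_totalLen (C : Cirquent) : C.pool.length ≤ C.totalLen := by
  unfold Cirquent.totalLen
  induction C.pool with
  | nil => simp
  | cons F l ih =>
    simp only [List.length_cons, List.map_cons, List.sum_cons]
    have := F.one_le_len
    omega

lemma Cirquent.arcs_le_of_wellFormed {C : Cirquent} (hC : C.WellFormed) :
    C.arcs ≤ C.groups.length * C.pool.length := by
  have hcard : ∀ n ∈ C.groups.map Finset.card, n ≤ C.pool.length := by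
    simp only [List.mem_map]
    rintro _ ⟨Γ, hΓ, rfl⟩
    simpa using card_le_card (hC Γ hΓ)
  simpa [Cirquent.arcs] using List.sum_le_card_nsmul _ _ hcard

lemma forall_map_image_subset_range {gs : List (Finset ℕ)} {n m : ℕ} {f : ℕ → ℕ}
    (hgs : ∀ Γ ∈ gs, Γ ⊆ range n) (hf : ∀ j < n, f j < m) :
    ∀ Γ ∈ gs.map (image f), Γ ⊆ range m := by
  simp only [List.mem_map]
  rintro _ ⟨Γ, hΓ, rfl⟩
  simp only [image_subset_iff, mem_range]
  exact fun j hj => hf j (mem_range.1 (hgs Γ hΓ hj))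

lemma swapIdx_lt {i j n : ℕ} (hi : i + 1 < n) (hj : j < n) : swapIdx i j < n := by
  unfold swapIdx; split_ifs <;> omega

lemma insShift_lt (i : ℕ) {j n : ℕ} (hj : j < n) : insShift i j < n + 1 := by
  unfold insShift; split_ifs <;> omega

lemma mergeIdx_lt {i j n : ℕ} (hi : i < n) (hj : j < n + 1) : mergeIdx i j < n := by
  unfold mergeIdx; split_ifs <;> omega

namespace AndMerge

variable {i : ℕ} {l l' : List (Finset ℕ)}

lemma length_le (h : AndMerge i l l') : l'.length ≤ l.length := by
  induction h with
  | nil => exact le_rfl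
  | skip _ _ _ ih | merge _ _ _ _ _ ih => simp only [List.length_cons]; omega

lemma forall_subset (h : AndMerge i l l') {s : Finset ℕ} (hl : ∀ Γ ∈ l, Γ ⊆ s) :
    ∀ Γ ∈ l', Γ ⊆ s := by
  induction h with
  | nil => simp
  | skip _ _ _ ih =>
    simp only [List.mem_cons, forall_eq_or_imp] at hl ⊢
    exact ⟨hl.1, ih hl.2⟩
  | merge _ _ _ _ _ ih =>
    simp only [List.mem_cons, forall_eq_or_imp] at hl ⊢
    exact ⟨union_subset hl.1 hl.2.1, ih hl.2.2⟩

end AndMerge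

section Rules

variable {r : RuleName} {P Q C : Cirquent}

lemma unRel_totalLen_le (h : unRel r P C) : P.totalLen ≤ C.totalLen := by
  cases r with
  | ofExch =>
    obtain ⟨l₁, l₂, F, G, hP, hC, -⟩ := h
    simp only [Cirquent.totalLen, hP, hC, List.map_append, List.map_cons, List.sum_append,
      List.sum_cons]
    omega
  | poolWeak =>
    obtain ⟨l₁, l₂, F, hP, hC, -⟩ := h
    simp [Cirquent.totalLen, hP, hC]
  | orIntro =>
    obtain ⟨l₁, l₂, F, G, hP, hC, -⟩ := h
    simp only [Cirquent.totalLen, hP, hC, List.map_append, List.map_cons, List.sum_append,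
      List.sum_cons, Fml.len]
    omega
  | andIntro =>
    obtain ⟨l₁, l₂, F, G, -, hP, hC, -⟩ := h
    simp only [Cirquent.totalLen, hP, hC, List.map_append, List.map_cons, List.sum_append,
      List.sum_cons, Fml.len]
    omega
  | ogExch | ogWeak | dupDown | dupUp => simp only [Cirquent.totalLen, h.1, le_refl]
  | emptyAx | idAx | mix => exact h.elim

lemma Cirquent.WellFormed.of_pool_eq (hP : P.WellFormed) (hpool : C.pool = P.pool)
    (hgroups : ∀ Γ ∈ C.groups, Γ ∈ P.groups) : C.WellFormed :=
  fun Γ hΓ => hpool ▸ hP Γ (hgroups Γ hΓ)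

lemma unRel_wellFormed (h : unRel r P C) (hP : P.WellFormed) : C.WellFormed := by
  cases r with
  | ofExch =>
    obtain ⟨l₁, l₂, F, G, hPl, hCl, hG⟩ := h
    have hlen : C.pool.length = P.pool.length := by simp [hPl, hCl]
    rw [Cirquent.WellFormed, hG, hlen]
    refine forall_map_image_subset_range hP fun j hj => swapIdx_lt ?_ hj
    rw [hPl, List.length_append, List.length_cons, List.length_cons]
    omega
  | poolWeak =>
    obtain ⟨l₁, l₂, F, hPl, hCl, hG⟩ := h
    have hlen : C.pool.length = P.pool.length + 1 := by simp [hPl, hCl]; omega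
    rw [Cirquent.WellFormed, hG, hlen]
    exact forall_map_image_subset_range hP fun j hj => insShift_lt _ hj
  | orIntro =>
    obtain ⟨l₁, l₂, F, G, hPl, hCl, hG⟩ := h
    have hlen : P.pool.length = C.pool.length + 1 := by simp [hPl, hCl]; omega
    rw [Cirquent.WellFormed, hG]
    refine forall_map_image_subset_range hP fun j hj => mergeIdx_lt ?_ (hlen ▸ hj)
    rw [hCl, List.length_append, List.length_cons]
    omega
  | andIntro =>
    obtain ⟨l₁, l₂, F, G, merged, hPl, hCl, hM, hG⟩ := h
    have hlen : P.pool.length = C.pool.length + 1 := by simp [hPl, hCl]; omega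
    rw [Cirquent.WellFormed, hG]
    refine forall_map_image_subset_range (hM.forall_subset hP) fun j hj =>
      mergeIdx_lt ?_ (hlen ▸ hj)
    rw [hCl, List.length_append, List.length_cons]
    omega
  | ogExch =>
    obtain ⟨hpool, g₁, g₂, Γ, Δ, hPg, hCg⟩ := h
    refine hP.of_pool_eq hpool fun Θ hΘ => ?_
    simp only [hPg, hCg, List.mem_append, List.mem_cons] at hΘ ⊢
    tauto
  | dupDown | dupUp =>
    obtain ⟨hpool, g₁, g₂, Γ, hPg, hCg⟩ := h
    refine hP.of_pool_eq hpool fun Θ hΘ => ?_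
    simp only [hPg, hCg, List.mem_append, List.mem_cons] at hΘ ⊢
    tauto
  | ogWeak =>
    obtain ⟨hpool, g₁, g₂, Γ, j, hj, -, hPg, hCg⟩ := h
    intro Δ hΔ
    rw [hpool]
    rw [Cirquent.WellFormed, hPg] at hP
    simp only [hCg, List.mem_append, List.mem_cons] at hΔ
    rcases hΔ with hΔ | rfl | hΔ
    · exact hP Δ (by simp [hΔ])
    · exact insert_subset (mem_range.2 hj) (hP Γ (by simp))
    · exact hP Δ (by simp [hΔ])
  | emptyAx | idAx | mix => exact h.elim

lemma unRel_groups_length_le (hr : r ≠ .dupDown) (h : unRel r P C) :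
    C.groups.length ≤ P.groups.length := by
  cases r with
  | ofExch | orIntro =>
    obtain ⟨_, _, _, _, -, -, hG⟩ := h
    simp [hG]
  | poolWeak =>
    obtain ⟨_, _, _, -, -, hG⟩ := h
    simp [hG]
  | andIntro =>
    obtain ⟨_, _, _, _, _, -, -, hM, hG⟩ := h
    simpa [hG] using hM.length_le
  | ogExch =>
    obtain ⟨-, _, _, _, _, hPg, hCg⟩ := h
    simp [hPg, hCg]
  | dupUp =>
    obtain ⟨-, _, _, _, hPg, hCg⟩ := h
    simp [hPg, hCg]
  | ogWeak =>
    obtain ⟨-, _, _, _, _, -, -, hPg, hCg⟩ := h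
    simp [hPg, hCg]
  | dupDown => exact absurd rfl hr
  | emptyAx | idAx | mix => exact h.elim

lemma MixStep.totalLen_eq (h : MixStep P Q C) : C.totalLen = P.totalLen + Q.totalLen := by
  simp [Cirquent.totalLen, h.1]

lemma MixStep.groups_length_eq (h : MixStep P Q C) :
    C.groups.length = P.groups.length + Q.groups.length := by
  simp [h.2]

lemma MixStep.wellFormed (h : MixStep P Q C) (hP : P.WellFormed) (hQ : Q.WellFormed) :
    C.WellFormed := by
  have hlen : C.pool.length = P.pool.length + Q.pool.length := by simp [h.1]
  have hQ' := forall_map_image_subset_range (f := (· + P.pool.length)) hQ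
    (m := C.pool.length) fun j hj => by omega
  intro Γ hΓ
  rcases List.mem_append.1 (h.2 ▸ hΓ) with hΓ | hΓ
  · exact (hP Γ hΓ).trans (range_subset_range.2 (by omega))
  · exact hQ' Γ hΓ

end Rules

namespace PTree

lemma exists_subtree_of_mem_cirquents (r : RuleName) {p : PTree} {C : Cirquent}
    (hC : C ∈ p.cirquents) :
    ∃ q : PTree, q.concl = C ∧ (p.Valid → q.Valid) ∧ q.count r ≤ p.count r := by
  induction p with
  | leaf D r' => exact ⟨leaf D r', (List.mem_singleton.1 hC).symm, id, le_rfl⟩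
  | un D r' p ih =>
    rcases List.mem_cons.1 hC with rfl | hC
    · exact ⟨un C r' p, rfl, id, le_rfl⟩
    · obtain ⟨q, hq, hv, hr⟩ := ih hC
      exact ⟨q, hq, fun h => hv h.1, by simp only [count]; omega⟩
  | bin D r' p₁ p₂ ih₁ ih₂ =>
    rcases List.mem_cons.1 hC with rfl | hC
    · exact ⟨bin C r' p₁ p₂, rfl, id, le_rfl⟩
    rcases List.mem_append.1 hC with hC | hC
    · obtain ⟨q, hq, hv, hr⟩ := ih₁ hC
      exact ⟨q, hq, fun h => hv h.1, by simp only [count]; omega⟩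
    · obtain ⟨q, hq, hv, hr⟩ := ih₂ hC
      exact ⟨q, hq, fun h => hv h.2.1, by simp only [count]; omega⟩

lemma totalLen_le_of_mem_cirquents {p : PTree} (hv : p.Valid) :
    ∀ C ∈ p.cirquents, C.totalLen ≤ p.concl.totalLen := by
  induction p with
  | leaf D r => simp [cirquents, concl]
  | un D r p ih =>
    have hstep := unRel_totalLen_le hv.2
    simp only [cirquents, concl, List.forall_mem_cons]
    exact ⟨le_rfl, fun C hC => (ih hv.1 C hC).trans hstep⟩
  | bin D r p₁ p₂ ih₁ ih₂ =>
    have hsum := hv.2.2.2.totalLen_eq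
    simp only [cirquents, concl, List.forall_mem_cons, List.mem_append]
    refine ⟨le_rfl, fun C hC => ?_⟩
    rcases hC with hC | hC
    · exact (ih₁ hv.1 C hC).trans (by omega)
    · exact (ih₂ hv.2.1 C hC).trans (by omega)

lemma concl_wellFormed {p : PTree} (hv : p.Valid) : p.concl.WellFormed := by
  induction p with
  | leaf D r =>
    rcases hv with ⟨-, rfl⟩ | ⟨-, F, rfl⟩
    · simp [Cirquent.WellFormed, emptyCirquent, concl]
    · simp [Cirquent.WellFormed, idCirquent, concl, insert_subset_iff]
  | un D r p ih => exact unRel_wellFormed hv.2 (ih hv.1)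
  | bin D r p₁ p₂ ih₁ ih₂ => exact hv.2.2.2.wellFormed (ih₁ hv.1) (ih₂ hv.2.1)

lemma concl_groups_length_le_totalLen {p : PTree} (hv : p.Valid)
    (hd : p.count .dupDown = 0) : p.concl.groups.length ≤ p.concl.totalLen := by
  induction p with
  | leaf D r =>
    rcases hv with ⟨-, rfl⟩ | ⟨-, F, rfl⟩
    · simp [emptyCirquent, concl]
    · have := F.one_le_len
      simp [idCirquent, concl, Cirquent.totalLen]
      omega
  | un D r p ih =>
    simp only [count] at hd
    have hr : r ≠ .dupDown := by rintro rfl; simp at hd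
    exact (unRel_groups_length_le hr hv.2).trans
      ((ih hv.1 (by omega)).trans (unRel_totalLen_le hv.2))
  | bin D r p₁ p₂ ih₁ ih₂ =>
    simp only [count] at hd
    have h₁ := ih₁ hv.1 (by omega)
    have h₂ := ih₂ hv.2.1 (by omega)
    simp only [concl, hv.2.2.2.groups_length_eq, hv.2.2.2.totalLen_eq] at h₁ h₂ ⊢
    omega

end PTree

end CirquentCalc

theorem cl5m_arc_bound_general (F : Fml) (k : ℕ) (hk : k = F.len) (p : PTree)
    (hv : p.Valid) (hd : DupFree p) (hc : p.concl = fmlCirquent F) :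
    ∀ C ∈ p.cirquents, C.arcs ≤ k ^ 2 := by
  intro C hC
  obtain ⟨q, rfl, hqv, hqd⟩ := p.exists_subtree_of_mem_cirquents .dupDown hC
  have hroot : p.concl.totalLen = k := by
    simp [hc, hk, fmlCirquent, Cirquent.totalLen]
  have hlen := p.totalLen_le_of_mem_cirquents hv _ hC
  have hgroups := q.concl_groups_length_le_totalLen (hqv hv) (Nat.le_zero.1 (hqd.trans_eq hd.1))
  have hpool := q.concl.pool_length_le_totalLen
  calc q.concl.arcs ≤ q.concl.groups.length * q.concl.pool.length :=
        Cirquent.arcs_le_of_wellFormed (q.concl_wellFormed (hqv hv))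
    _ ≤ k * k := Nat.mul_le_mul (by omega) (by omega)
    _ = k ^ 2 := (sq k).symm

/-- In any CL5⁻ proof of a formula F of length k with no empty
cirquent axiom, no cirquent in the proof has more than k² arcs. -/
theorem cl5m_arc_bound (F : Fml) (k : ℕ) (hk : k = F.len) (p : PTree)
    (hv : p.Valid) (hd : DupFree p) (hc : p.concl = fmlCirquent F)
    (he : p.count RuleName.emptyAx = 0) :
    ∀ C ∈ p.cirquents, C.arcs ≤ k ^ 2 :=
  cl5m_arc_bound_general F k hk p hv hd hc
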